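/- arXiv:1604.00881 — 3 statements merged into one kernel-verified Lean document; each statement's English description precedes it below -/
import Mathlib

section
/- Let X be a Banach space, V open, A : V → X Fréchet differentiable at a fixed point x* ∈ V with spectral radius ρ(A'(x*)) < 1. Then for every ε > 0 with ρ(A'(x*)) + ε < 1, there exist radii r, r' > 0 such that for every starting point x⁰ ∈ B(x*, r'), the successive approximations x^{k+1} = A(x^k) are well-defined, remain in B(x*, r) ⊆ V, converge to x*, and satisfy ‖x^k − x*‖ ≤ r (ρ(A'(x*)) + ε)^k for all k. -/
/-!
By Gelfand's formula there is `n ≥ 1` with `‖A'ⁿ‖ ≤ tⁿ` for `t = ρ + ε/2`. In the equivalent norm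
`N u = ∑_{i<n} ‖A'ⁱ u‖ / tⁱ` the derivative `A'` contracts by the factor `t`, so near `x*` the map
`A` contracts by the factor `ρ + ε` in `N`, and the successive approximations converge
geometrically.
-/

open Filter Metric Topology

theorem spectralRadius_ne_top {𝕜 R : Type*} [NormedField 𝕜] [NormedRing R] [NormedAlgebra 𝕜 R]
    [CompleteSpace R] (a : R) : spectralRadius 𝕜 a ≠ ⊤ := by
  refine ne_top_of_le_ne_top ?_ (spectrum.spectralRadius_le_pow_nnnorm_pow_one_div 𝕜 a 0)
  simpa using ENNReal.mul_ne_top ENNReal.coe_ne_top ENNReal.coe_ne_top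

theorem exists_norm_pow_le_pow_of_spectralRadius_lt {R : Type*} [NormedRing R]
    [NormedAlgebra ℂ R] [CompleteSpace R] (a : R) {t : ℝ}
    (ht : spectralRadius ℂ a < ENNReal.ofReal t) : ∃ n, n ≠ 0 ∧ ‖a ^ n‖ ≤ t ^ n := by
  have ht0 : 0 < t := ENNReal.ofReal_pos.mp (pos_of_gt ht)
  obtain ⟨n, hroot, hn⟩ :=
    (((spectrum.pow_norm_pow_one_div_tendsto_nhds_spectralRadius a).eventually_lt_const ht).and
      (eventually_ne_atTop 0)).exists
  rw [ENNReal.ofReal_lt_ofReal_iff ht0] at hroot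
  refine ⟨n, hn, ?_⟩
  calc ‖a ^ n‖ = (‖a ^ n‖ ^ (1 / n : ℝ)) ^ n := by
        rw [one_div, Real.rpow_inv_natCast_pow (norm_nonneg _) hn]
    _ ≤ t ^ n := by gcongr

section AdaptedNorm

variable {𝕜 E : Type*} [NontriviallyNormedField 𝕜] [SeminormedAddCommGroup E] [NormedSpace 𝕜 E]
  (L : E →L[𝕜] E) (t : ℝ) (n : ℕ)

/-- A norm in which `L` contracts by the factor `t` as soon as `‖Lⁿ‖ ≤ tⁿ`. -/
noncomputable def adaptedNorm (u : E) : ℝ :=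
  ∑ i ∈ Finset.range n, ‖(L ^ i) u‖ / t ^ i

variable {L t n}

theorem norm_le_adaptedNorm (ht : 0 ≤ t) (hn : n ≠ 0) (u : E) : ‖u‖ ≤ adaptedNorm L t n u := by
  calc ‖u‖ = ‖(L ^ 0) u‖ / t ^ 0 := by simp
    _ ≤ adaptedNorm L t n u := Finset.single_le_sum (f := fun i => ‖(L ^ i) u‖ / t ^ i)
        (fun i _ => by positivity) (Finset.mem_range.mpr (Nat.pos_of_ne_zero hn))

theorem adaptedNorm_add_le (ht : 0 ≤ t) (u v : E) :
    adaptedNorm L t n (u + v) ≤ adaptedNorm L t n u + adaptedNorm L t n v := by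
  rw [adaptedNorm, adaptedNorm, adaptedNorm, ← Finset.sum_add_distrib]
  gcongr with i
  rw [← add_div, map_add]
  gcongr
  exact norm_add_le _ _

theorem exists_adaptedNorm_le_mul_norm (ht : 0 ≤ t) :
    ∃ C > 0, ∀ u : E, adaptedNorm L t n u ≤ C * ‖u‖ := by
  refine ⟨∑ i ∈ Finset.range n, ‖L ^ i‖ / t ^ i + 1,
    by positivity, fun u => ?_⟩
  calc adaptedNorm L t n u ≤ ∑ i ∈ Finset.range n, ‖L ^ i‖ / t ^ i * ‖u‖ := by
        refine Finset.sum_le_sum fun i _ => ?_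
        rw [div_mul_eq_mul_div]
        gcongr
        exact (L ^ i).le_opNorm u
    _ ≤ _ := by
        rw [← Finset.sum_mul]
        gcongr
        linarith

theorem adaptedNorm_apply_le (ht : 0 < t) (hLn : ‖L ^ n‖ ≤ t ^ n) (u : E) :
    adaptedNorm L t n (L u) ≤ t * adaptedNorm L t n u := by
  have hshift : adaptedNorm L t n (L u)
      = t * (adaptedNorm L t n u + ‖(L ^ n) u‖ / t ^ n - ‖u‖) := by
    have := Finset.sum_range_succ' (fun i => ‖(L ^ i) u‖ / t ^ i) n
    rw [Finset.sum_range_succ] at this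
    simp only [pow_zero, one_apply_eq_self, div_one] at this
    unfold adaptedNorm
    rw [this, add_sub_cancel_right, Finset.mul_sum]
    refine Finset.sum_congr rfl fun i _ => ?_
    rw [pow_succ, mul_apply_eq_comp, pow_succ]
    field_simp
  have hlast : ‖(L ^ n) u‖ / t ^ n ≤ ‖u‖ := by
    rw [div_le_iff₀ (by positivity), mul_comm]
    exact (L ^ n).le_of_opNorm_le hLn u
  rw [hshift]
  gcongr
  linarith

theorem eventually_adaptedNorm_sub_le {f : E → E} {x₀ : E} (hf : HasFDerivAt f L x₀)
    (hfix : f x₀ = x₀) (ht : 0 < t) (hn : n ≠ 0) (hLn : ‖L ^ n‖ ≤ t ^ n) {q : ℝ} (htq : t < q) :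
    ∀ᶠ x in 𝓝 x₀, adaptedNorm L t n (f x - x₀) ≤ q * adaptedNorm L t n (x - x₀) := by
  obtain ⟨C, hC, hNC⟩ := exists_adaptedNorm_le_mul_norm (L := L) (n := n) ht.le
  filter_upwards [hf.isLittleO.def (div_pos (sub_pos.mpr htq) hC)] with x hx
  rw [hfix] at hx
  set N := adaptedNorm L t n
  calc N (f x - x₀) = N (L (x - x₀) + (f x - x₀ - L (x - x₀))) := by rw [add_sub_cancel]
    _ ≤ N (L (x - x₀)) + N (f x - x₀ - L (x - x₀)) := adaptedNorm_add_le ht.le _ _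
    _ ≤ t * N (x - x₀) + C * ((q - t) / C * ‖x - x₀‖) :=
        add_le_add (adaptedNorm_apply_le ht hLn _) ((hNC _).trans (by gcongr))
    _ = t * N (x - x₀) + (q - t) * ‖x - x₀‖ := by field_simp
    _ ≤ t * N (x - x₀) + (q - t) * N (x - x₀) := by
        gcongr
        exact norm_le_adaptedNorm ht.le hn _
    _ = q * N (x - x₀) := by ring

end AdaptedNorm

theorem iterate_le_pow_mul_of_le_mul {α : Type*} {g : α → α} {V : α → ℝ} {q r : ℝ}
    (hq₀ : 0 ≤ q) (hq₁ : q ≤ 1) (hg : ∀ x, V x < r → V (g x) ≤ q * V x) {x : α}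
    (hx₀ : 0 ≤ V x) (hx : V x < r) (k : ℕ) : V (g^[k] x) ≤ q ^ k * V x := by
  induction k with
  | zero => simp
  | succ k ih =>
    have hk : V (g^[k] x) < r := by
      calc V (g^[k] x) ≤ q ^ k * V x := ih
        _ ≤ V x := mul_le_of_le_one_left hx₀ (pow_le_one₀ hq₀ hq₁)
        _ < r := hx
    rw [Function.iterate_succ_apply', pow_succ', mul_assoc]
    exact (hg _ hk).trans (mul_le_mul_of_nonneg_left ih hq₀)

theorem stmt5_general
    {X : Type*} [NormedAddCommGroup X] [NormedSpace ℂ X] [CompleteSpace X]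
    (V : Set X) (hV : IsOpen V) (A : X → X) (xs : X) (hxs : xs ∈ V)
    (hfix : A xs = xs) (A' : X →L[ℂ] X) (hA' : HasFDerivAt A A' xs)
    (ε : ℝ) (hε : 0 < ε) (hρε : (spectralRadius ℂ A').toReal + ε < 1) :
    ∃ r > 0, ∃ r' > 0, Metric.ball xs r ⊆ V ∧
      ∀ x0 ∈ Metric.ball xs r',
        (∀ k : ℕ, A^[k] x0 ∈ Metric.ball xs r ∧
          ‖A^[k] x0 - xs‖ ≤ r * ((spectralRadius ℂ A').toReal + ε) ^ k) ∧
        Filter.Tendsto (fun k => A^[k] x0) Filter.atTop (nhds xs) := by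
  set ρ := (spectralRadius ℂ A').toReal
  have ht : 0 < ρ + ε / 2 := by positivity
  obtain ⟨n, hn, hAn⟩ := exists_norm_pow_le_pow_of_spectralRadius_lt A' (t := ρ + ε / 2) (by
    rw [ENNReal.lt_ofReal_iff_toReal_lt (spectralRadius_ne_top A')]
    linarith)
  set N := adaptedNorm A' (ρ + ε / 2) n
  have hnorm_le : ∀ u, ‖u‖ ≤ N u := norm_le_adaptedNorm ht.le hn
  obtain ⟨C, hC, hNC⟩ := exists_adaptedNorm_le_mul_norm (L := A') (n := n) ht.le
  obtain ⟨r, hr, hball⟩ := eventually_nhds_iff_ball.mp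
    ((eventually_adaptedNorm_sub_le hA' hfix ht hn hAn (by linarith : ρ + ε / 2 < ρ + ε)).and
      (hV.mem_nhds hxs))
  have hmem : ∀ x, N (x - xs) < r → x ∈ ball xs r := fun x hx =>
    mem_ball_iff_norm.mpr ((hnorm_le _).trans_lt hx)
  refine ⟨r, hr, r / C, by positivity, fun x hx => (hball x hx).2, fun x0 hx0 => ?_⟩
  have hx0 : N (x0 - xs) < r := by
    rw [mem_ball_iff_norm, lt_div_iff₀ hC, mul_comm] at hx0
    exact (hNC _).trans_lt hx0
  have hq : 0 ≤ ρ + ε := by positivity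
  have hdist (k : ℕ) : ‖A^[k] x0 - xs‖ ≤ (ρ + ε) ^ k * N (x0 - xs) :=
    (hnorm_le _).trans <| iterate_le_pow_mul_of_le_mul (V := fun x => N (x - xs)) hq hρε.le
      (fun x hx => (hball x (hmem x hx)).1) ((norm_nonneg _).trans (hnorm_le _)) hx0 k
  have hbound (k : ℕ) : ‖A^[k] x0 - xs‖ ≤ r * (ρ + ε) ^ k :=
    (hdist k).trans (by rw [mul_comm]; gcongr)
  refine ⟨fun k => ⟨?_, hbound k⟩, ?_⟩
  · refine mem_ball_iff_norm.mpr ((hdist k).trans_lt ?_)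
    exact (mul_le_of_le_one_left ((norm_nonneg _).trans (hnorm_le _))
      (pow_le_one₀ hq hρε.le)).trans_lt hx0
  · refine tendsto_iff_norm_sub_tendsto_zero.mpr (squeeze_zero (fun _ => norm_nonneg _) hbound ?_)
    simpa using (tendsto_pow_atTop_nhds_zero_of_lt_one hq hρε).const_mul r

theorem stmt5
    {X : Type*} [NormedAddCommGroup X] [NormedSpace ℂ X] [CompleteSpace X]
    (V : Set X) (hV : IsOpen V) (A : X → X) (xs : X) (hxs : xs ∈ V)
    (hfix : A xs = xs) (A' : X →L[ℂ] X) (hA' : HasFDerivAt A A' xs)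
    (hρ : spectralRadius ℂ A' < 1)
    (ε : ℝ) (hε : 0 < ε) (hρε : (spectralRadius ℂ A').toReal + ε < 1) :
    ∃ r > 0, ∃ r' > 0, Metric.ball xs r ⊆ V ∧
      ∀ x0 ∈ Metric.ball xs r',
        (∀ k : ℕ, A^[k] x0 ∈ Metric.ball xs r ∧
          ‖A^[k] x0 - xs‖ ≤ r * ((spectralRadius ℂ A').toReal + ε) ^ k) ∧
        Filter.Tendsto (fun k => A^[k] x0) Filter.atTop (nhds xs) :=
  stmt5_general V hV A xs hxs hfix A' hA' ε hε hρε
end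

section
/- Let X be a Banach space, T a compact bounded linear operator on X such that I − T is invertible, and (T_n) a sequence of bounded linear operators converging pointwise to T with the sequence (T_n − T) being collectively compact (i.e., the set ∪_n {(T_n − T)x : ‖x‖ ≤ 1} is relatively compact) and sup_n ‖T_n‖ < ∞. Then for n large enough, I − T_n is invertible and sup_n ‖(I − T_n)⁻¹‖ < ∞. -/
/-!
Write `1 - Tₙ = (1 - T)(1 - Aₙ)` with `Aₙ = (1 - T)⁻¹(Tₙ - T)`. The operators `Tₙ - T` are
uniformly bounded and tend to `0` pointwise, hence uniformly on compact sets; since all the `Aₙ`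
map the unit ball into one compact set, `‖Aₙ²‖ = ‖(1 - T)⁻¹(Tₙ - T)Aₙ‖ → 0`. Once `‖Aₙ²‖ ≤ 1/2`,
a Neumann series inverts `1 - Aₙ²`, and `(1 - Aₙ)⁻¹ = (1 + Aₙ)(1 - Aₙ²)⁻¹` is bounded
independently of `n`.
-/

open Filter Metric Set Topology

theorem exists_inverse_one_sub_of_norm_mul_self_le {R : Type*} [NormedRing R] [CompleteSpace R]
    (hR : ‖(1 : R)‖ ≤ 1) {a : R} (ha : ‖a * a‖ ≤ 1 / 2) :
    ∃ b : R, (1 - a) * b = 1 ∧ b * (1 - a) = 1 ∧ ‖b‖ ≤ 2 * (1 + ‖a‖) := by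
  have ha' : ‖a * a‖ < 1 := ha.trans_lt (by norm_num)
  set u := Units.oneSub (a * a) ha'
  have hu : (u : R) = 1 - a * a := rfl
  have hfac : (1 - a) * (1 + a) = 1 - a * a := by noncomm_ring
  have hcomm : Commute (1 - a) (1 + a) :=
    (Commute.one_left _).sub_left ((Commute.one_right a).add_right (Commute.refl a))
  have hinv : Commute (1 - a) ↑u⁻¹ := by
    refine Commute.units_inv_right ?_
    rw [hu, ← hfac]
    exact (Commute.refl _).mul_right hcomm
  have hu_inv : ‖(↑u⁻¹ : R)‖ ≤ 2 := by
    calc ‖(↑u⁻¹ : R)‖ = ‖∑' n : ℕ, (a * a) ^ n‖ := rfl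
      _ ≤ ‖(1 : R)‖ - 1 + (1 - ‖a * a‖)⁻¹ := tsum_geometric_le_of_norm_lt_one _ ha'
      _ ≤ 2 := by
        have : (1 - ‖a * a‖)⁻¹ ≤ 2 := by
          rw [inv_le_comm₀ (by linarith) (by norm_num)]
          linarith
        linarith
  refine ⟨(1 + a) * ↑u⁻¹, ?_, ?_, ?_⟩
  · rw [← mul_assoc, hfac, ← hu, u.mul_inv]
  · rw [mul_assoc, ← hinv.eq, ← mul_assoc, ← hcomm.eq, hfac, ← hu, u.mul_inv]
  · calc ‖(1 + a) * ↑u⁻¹‖ ≤ ‖1 + a‖ * ‖(↑u⁻¹ : R)‖ := norm_mul_le _ _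
      _ ≤ (1 + ‖a‖) * 2 := by
        gcongr
        exact (norm_add_le _ _).trans (by gcongr)
      _ = 2 * (1 + ‖a‖) := mul_comm _ _

section Operators

variable {𝕜 E F G ι : Type*} [NontriviallyNormedField 𝕜] [NormedAddCommGroup E] [NormedSpace 𝕜 E]
  [NormedAddCommGroup F] [NormedSpace 𝕜 F] [NormedAddCommGroup G] [NormedSpace 𝕜 G]

theorem ContinuousLinearMap.tendstoUniformlyOn_of_norm_le {l : Filter ι} {S : ι → F →L[𝕜] G}
    {C : ℝ} (hS : ∀ i, ‖S i‖ ≤ C) {T : F →L[𝕜] G}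
    (hST : ∀ y, Tendsto (fun i => S i y) l (𝓝 (T y))) {K : Set F} (hK : IsCompact K) :
    TendstoUniformlyOn (fun i => ⇑(S i)) T l K := by
  have heq : Equicontinuous (fun i => ⇑(S i)) :=
    ((NormedSpace.equicontinuous_TFAE S).out 1 5).mpr (⟨C, hS⟩ : ∃ C, ∀ i, ‖S i‖ ≤ C)
  have hcover : ⋃₀ {K : Set F | IsCompact K} = univ :=
    eq_univ_of_forall fun y => ⟨{y}, isCompact_singleton, rfl⟩
  have := (EquicontinuousOn.tendsto_uniformOnFun_iff_pi (fun _ h => h) hcover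
    (fun K _ => heq.equicontinuousOn K) l T).mpr (tendsto_pi_nhds.mpr hST)
  exact UniformOnFun.tendsto_iff_tendstoUniformlyOn.mp this K hK

theorem ContinuousLinearMap.tendsto_comp_of_collectivelyCompact [NormedAlgebra ℝ 𝕜]
    {l : Filter ι} {S : ι → F →L[𝕜] G} {C : ℝ} (hS : ∀ i, ‖S i‖ ≤ C)
    (hS₀ : ∀ y, Tendsto (fun i => S i y) l (𝓝 0)) {R : ι → E →L[𝕜] F} {K : Set F}
    (hK : IsCompact K) (hR : ∀ i, ∀ x ∈ closedBall (0 : E) 1, R i x ∈ K) :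
    Tendsto (fun i => S i ∘L R i) l (𝓝 0) := by
  have hunif := Metric.tendstoUniformlyOn_iff.mp
    (tendstoUniformlyOn_of_norm_le hS (T := 0) hS₀ hK)
  refine NormedAddGroup.tendsto_nhds_zero.mpr fun ε hε => ?_
  filter_upwards [hunif (ε / 2) (half_pos hε)] with i hi
  refine lt_of_le_of_lt (opNorm_le_of_unit_norm (half_pos hε).le fun x hx => ?_) (half_lt_self hε)
  simpa using (hi _ (hR i x (mem_closedBall_zero_iff.mpr hx.le))).le

end Operators

theorem stmt12_general
    {X : Type*} [NormedAddCommGroup X] [NormedSpace ℝ X] [CompleteSpace X]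
    (T : X →L[ℝ] X)
    (U : X →L[ℝ] X) (hU₁ : (1 - T) * U = 1) (hU₂ : U * (1 - T) = 1)
    (Tn : ℕ → X →L[ℝ] X)
    (hptw : ∀ x : X, Filter.Tendsto (fun n => Tn n x) Filter.atTop (nhds (T x)))
    (hcc : IsCompact (closure (⋃ n : ℕ, (fun x => (Tn n - T) x) '' Metric.closedBall 0 1)))
    (c : ℝ) (hbd : ∀ n, ‖Tn n‖ ≤ c) :
    ∃ N : ℕ, ∃ C : ℝ, ∀ n ≥ N, ∃ V : X →L[ℝ] X,
      (1 - Tn n) * V = 1 ∧ V * (1 - Tn n) = 1 ∧ ‖V‖ ≤ C := by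
  have hbd' : ∀ n, ‖Tn n - T‖ ≤ c + ‖T‖ := fun n =>
    (norm_sub_le _ _).trans (by gcongr; exact hbd n)
  have hnull : ∀ x, Tendsto (fun n => (Tn n - T) x) atTop (𝓝 0) := fun x => by
    simpa using (hptw x).sub_const (T x)
  have hcompact : ∀ n, ∀ x ∈ closedBall (0 : X) 1,
      (U * (Tn n - T)) x ∈ U '' closure (⋃ k, (fun x => (Tn k - T) x) '' closedBall 0 1) :=
    fun n x hx => mem_image_of_mem _ (subset_closure (mem_iUnion_of_mem n (mem_image_of_mem _ hx)))
  have hsq : Tendsto (fun n => (U * (Tn n - T)) * (U * (Tn n - T))) atTop (𝓝 0) := by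
    have := tendsto_const_nhds (x := U).mul
      (ContinuousLinearMap.tendsto_comp_of_collectivelyCompact hbd' hnull (hcc.image U.continuous)
        hcompact)
    rwa [mul_zero] at this
  obtain ⟨N, hN⟩ := eventually_atTop.mp
    (NormedAddGroup.tendsto_nhds_zero.mp hsq (1 / 2) (by norm_num))
  refine ⟨N, 2 * (1 + ‖U‖ * (c + ‖T‖)) * ‖U‖, fun n hn => ?_⟩
  obtain ⟨B, hB₁, hB₂, hB⟩ := exists_inverse_one_sub_of_norm_mul_self_le
    ContinuousLinearMap.norm_id_le (hN n hn).le
  have hfac : 1 - Tn n = (1 - T) * (1 - U * (Tn n - T)) := by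
    rw [mul_sub, ← mul_assoc, hU₁]
    noncomm_ring
  refine ⟨B * U, ?_, ?_, ?_⟩
  · rw [hfac, mul_assoc, ← mul_assoc _ B, hB₁, one_mul, hU₁]
  · rw [hfac, mul_assoc, ← mul_assoc U, hU₂, one_mul, hB₂]
  · calc ‖B * U‖ ≤ ‖B‖ * ‖U‖ := norm_mul_le _ _
      _ ≤ 2 * (1 + ‖U‖ * (c + ‖T‖)) * ‖U‖ := by
        gcongr
        exact hB.trans (by gcongr; exact (norm_mul_le _ _).trans (by gcongr; exact hbd' n))

theorem stmt12
    {X : Type*} [NormedAddCommGroup X] [NormedSpace ℝ X] [CompleteSpace X]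
    (T : X →L[ℝ] X) (hT : IsCompactOperator T)
    (U : X →L[ℝ] X) (hU₁ : (1 - T) * U = 1) (hU₂ : U * (1 - T) = 1)
    (Tn : ℕ → X →L[ℝ] X)
    (hptw : ∀ x : X, Filter.Tendsto (fun n => Tn n x) Filter.atTop (nhds (T x)))
    (hcc : IsCompact (closure (⋃ n : ℕ, (fun x => (Tn n - T) x) '' Metric.closedBall 0 1)))
    (c : ℝ) (hbd : ∀ n, ‖Tn n‖ ≤ c) :
    ∃ N : ℕ, ∃ C : ℝ, ∀ n ≥ N, ∃ V : X →L[ℝ] X,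
      (1 - Tn n) * V = 1 ∧ V * (1 - Tn n) = 1 ∧ ‖V‖ ≤ C :=
  stmt12_general T U hU₁ hU₂ Tn hptw hcc c hbd
end

section
/- Let X be a Banach space, T ∈ L(X) with I − T invertible, and (T_n) a sequence in L(X) such that S_n := (I − T_n)⁻¹ exists for all n with sup_n ‖S_n‖ ≤ c < ∞, and such that ‖(T − T_n) S_n (T − T_n)‖ → 0 as n → ∞. Then the spectral radius ρ(I − S_n(I − T)) → 0 as n → ∞; in particular it is < 1 for n large enough. -/
open Filter Topology ENNReal

/-!
Since `S (I - T') = I`, the operator `B = I - S (I - T)` equals `S (T - T')`, so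
`B² = S ((T - T') S (T - T'))` is small whenever `(T - T') S (T - T')` is small and `S` stays
bounded. The spectral radius is controlled by any power, `ρ(B) ≤ ‖B²‖^{1/2} ‖I‖^{1/2}`,
hence `ρ(B) → 0`.
-/

theorem one_sub_mul_one_sub_eq_mul_sub {R : Type*} [Ring R] {S T T' : R}
    (hS : S * (1 - T') = 1) : 1 - S * (1 - T) = S * (T - T') := by
  nth_rewrite 1 [← hS]
  noncomm_ring

theorem norm_sq_one_sub_mul_one_sub_le {R : Type*} [NormedRing R] {S T T' : R}
    (hS : S * (1 - T') = 1) :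
    ‖(1 - S * (1 - T)) ^ 2‖ ≤ ‖S‖ * ‖(T - T') * S * (T - T')‖ := by
  have hsq : (1 - S * (1 - T)) ^ 2 = S * ((T - T') * S * (T - T')) := by
    rw [one_sub_mul_one_sub_eq_mul_sub hS]
    noncomm_ring
  rw [hsq]
  exact norm_mul_le _ _

theorem tendsto_spectralRadius_zero_of_tendsto_pow {𝕜 A ι : Type*} [NormedField 𝕜]
    [NormedRing A] [NormedAlgebra 𝕜 A] [CompleteSpace A] {l : Filter ι} {a : ι → A} {k : ℕ}
    (h : Tendsto (fun i => a i ^ (k + 1)) l (𝓝 0)) :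
    Tendsto (fun i => spectralRadius 𝕜 (a i)) l (𝓝 0) := by
  have hnorm : Tendsto (fun i => (‖a i ^ (k + 1)‖₊ : ℝ≥0∞)) l (𝓝 0) := by
    simpa using ENNReal.tendsto_coe.mpr ((continuous_nnnorm.tendsto 0).comp h)
  have hroot : Tendsto (fun i => (‖a i ^ (k + 1)‖₊ : ℝ≥0∞) ^ (1 / (k + 1) : ℝ)) l (𝓝 0) := by
    have hexp : (0 : ℝ) < 1 / (k + 1) := by positivity
    simpa only [Function.comp_def, ENNReal.zero_rpow_of_pos hexp] using
      ((ENNReal.continuous_rpow_const (y := 1 / (k + 1))).tendsto 0).comp hnorm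
  have hbound : Tendsto (fun i => (‖a i ^ (k + 1)‖₊ : ℝ≥0∞) ^ (1 / (k + 1) : ℝ) *
      (‖(1 : A)‖₊ : ℝ≥0∞) ^ (1 / (k + 1) : ℝ)) l (𝓝 0) := by
    simpa using ENNReal.Tendsto.mul_const hroot
      (Or.inr (ENNReal.rpow_ne_top_of_nonneg (by positivity) ENNReal.coe_ne_top))
  exact tendsto_of_tendsto_of_tendsto_of_le_of_le tendsto_const_nhds hbound
    (fun _ => bot_le) (fun i => spectrum.spectralRadius_le_pow_nnnorm_pow_one_div 𝕜 (a i) k)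

theorem stmt13_general
    {X : Type*} [NormedAddCommGroup X] [NormedSpace ℂ X] [CompleteSpace X]
    (T : X →L[ℂ] X)
    (Tn : ℕ → X →L[ℂ] X) (S : ℕ → X →L[ℂ] X)
    (hS : ∀ n, (1 - Tn n) * S n = 1 ∧ S n * (1 - Tn n) = 1)
    (c : ℝ) (hc : ∀ n, ‖S n‖ ≤ c)
    (hlim : Filter.Tendsto (fun n => ‖(T - Tn n) * S n * (T - Tn n)‖)
      Filter.atTop (nhds 0)) :
    Filter.Tendsto (fun n => spectralRadius ℂ (1 - S n * (1 - T)))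
      Filter.atTop (nhds 0) ∧
    ∃ N : ℕ, ∀ n ≥ N, spectralRadius ℂ (1 - S n * (1 - T)) < 1 := by
  have hsq_le : ∀ n, ‖(1 - S n * (1 - T)) ^ 2‖ ≤ c * ‖(T - Tn n) * S n * (T - Tn n)‖ :=
    fun n => (norm_sq_one_sub_mul_one_sub_le (hS n).2).trans (by gcongr; exact hc n)
  have hsq : Tendsto (fun n => (1 - S n * (1 - T)) ^ (1 + 1)) atTop (𝓝 0) :=
    squeeze_zero_norm hsq_le (by simpa using hlim.const_mul c)
  have hρ := tendsto_spectralRadius_zero_of_tendsto_pow (𝕜 := ℂ) hsq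
  exact ⟨hρ, eventually_atTop.mp (hρ.eventually_lt_const zero_lt_one)⟩

theorem stmt13
    {X : Type*} [NormedAddCommGroup X] [NormedSpace ℂ X] [CompleteSpace X]
    (T : X →L[ℂ] X) (U : X →L[ℂ] X)
    (hU₁ : (1 - T) * U = 1) (hU₂ : U * (1 - T) = 1)
    (Tn : ℕ → X →L[ℂ] X) (S : ℕ → X →L[ℂ] X)
    (hS : ∀ n, (1 - Tn n) * S n = 1 ∧ S n * (1 - Tn n) = 1)
    (c : ℝ) (hc : ∀ n, ‖S n‖ ≤ c)
    (hlim : Filter.Tendsto (fun n => ‖(T - Tn n) * S n * (T - Tn n)‖)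
      Filter.atTop (nhds 0)) :
    Filter.Tendsto (fun n => spectralRadius ℂ (1 - S n * (1 - T)))
      Filter.atTop (nhds 0) ∧
    ∃ N : ℕ, ∀ n ≥ N, spectralRadius ℂ (1 - S n * (1 - T)) < 1 :=
  stmt13_general T Tn S hS c hc hlim
end
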